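/- arXiv:2311.08729 — 2 statements merged into one kernel-verified Lean document; each statement's English description precedes it below -/
import Mathlib

section
/- Let N ≥ 2 and let f : ℂᴺ → ℝ satisfy f(e^{iθ} ξ A) = f(ξ) for all ξ ∈ ℂᴺ, all θ ∈ ℝ and all A ∈ O(N,ℝ). Then for any ξ, η ∈ ℂᴺ: if Σ_j |ξ_j|² = Σ_j |η_j|² and |Σ_j ξ_j²| = |Σ_j η_j²|, then f(ξ) = f(η). In particular, f(ξ) depends only on r = Σ_j |ξ_j|² and |Σ_j ξ_j²|. -/
open Matrix

/-!
Write `ξ = x + i y` with `x y : ℝᴺ`. Then `∑ |ξ_j|² = |x|² + |y|²` and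
`∑ ξ_j² = |x|² - |y|² + 2 i ⟪x, y⟫`. Multiplying `ξ` by a phase makes `∑ ξ_j²` real, i.e. `x ⊥ y`,
and then `|x|` and `|y|` are determined by the two invariants. When `N ≥ 2`, two orthogonal pairs
with the same lengths are carried to each other by an orthogonal matrix: complete `x / |x|` and
`y / |y|` to orthonormal bases and map one basis to the other. So the orthogonal group, together
with a phase that aligns the arguments of `∑ ξ_j²` and `∑ η_j²`, carries `ξ` to `η`.
-/

theorem exists_orthonormalBasis_eq_norm_smul {𝕜 E ι : Type*} [RCLike 𝕜] [NormedAddCommGroup E]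
    [InnerProductSpace 𝕜 E] [FiniteDimensional 𝕜 E] [Fintype ι]
    (hcard : Module.finrank 𝕜 E = Fintype.card ι) {v : ι → E}
    (hv : Pairwise fun i j => inner 𝕜 (v i) (v j) = 0) :
    ∃ b : OrthonormalBasis ι 𝕜 E, ∀ i, v i = (‖v i‖ : 𝕜) • b i := by
  classical
  set w : ι → E := fun i => (‖v i‖⁻¹ : 𝕜) • v i
  have hw : Orthonormal 𝕜 ({i | v i ≠ 0}.domRestrict w) := by
    refine ⟨fun ⟨i, hi⟩ => norm_smul_inv_norm hi, fun ⟨i, _⟩ ⟨j, _⟩ hij => ?_⟩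
    simp [w, inner_smul_left, inner_smul_right, hv (Subtype.coe_ne_coe.mpr hij)]
  obtain ⟨b, hb⟩ := hw.exists_orthonormalBasis_extension_of_card_eq hcard
  refine ⟨b, fun i => ?_⟩
  by_cases hi : v i = 0
  · simp [hi]
  · rw [hb i hi, smul_inv_smul₀ (by simpa using hi)]

theorem OrthonormalBasis.exists_mem_orthogonalGroup_vecMul_eq {n : Type*} [Fintype n]
    [DecidableEq n] (b b' : OrthonormalBasis n ℝ (EuclideanSpace ℝ n)) :
    ∃ A ∈ orthogonalGroup n ℝ, ∀ i, (b i).ofLp ᵥ* A = (b' i).ofLp := by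
  have hP : ∀ (c : OrthonormalBasis n ℝ (EuclideanSpace ℝ n)) i j,
      (EuclideanSpace.basisFun n ℝ).toBasis.toMatrix c i j = c j i := fun c i j => by
    rw [Module.Basis.toMatrix_apply, OrthonormalBasis.coe_toBasis_repr_apply,
      EuclideanSpace.basisFun_repr]
  have hvecMul : ∀ i, (b i).ofLp ᵥ* (EuclideanSpace.basisFun n ℝ).toBasis.toMatrix b
      = Pi.single i 1 := fun i => by
    ext j
    have := orthonormal_iff_ite.mp b.orthonormal j i
    simp only [vecMul, dotProduct, hP, EuclideanSpace.inner_eq_star_dotProduct,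
      star_trivial] at this ⊢
    rw [this]
    simp [Pi.single_apply, eq_comm]
  have hmulVec : ∀ i, (EuclideanSpace.basisFun n ℝ).toBasis.toMatrix b' *ᵥ Pi.single i 1
      = (b' i).ofLp := fun i => by
    ext j
    simp [hP]
  have hPmem : ∀ c : OrthonormalBasis n ℝ (EuclideanSpace ℝ n),
      (EuclideanSpace.basisFun n ℝ).toBasis.toMatrix c ∈ orthogonalGroup n ℝ :=
    (EuclideanSpace.basisFun n ℝ).toMatrix_orthonormalBasis_mem_orthogonal
  refine ⟨_, mul_mem (hPmem b) (transpose_mem_unitaryGroup_iff.mpr (hPmem b')), fun i => ?_⟩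
  rw [← vecMul_vecMul, hvecMul, vecMul_transpose, hmulVec]

theorem exists_mem_orthogonalGroup_vecMul_eq_of_dotProduct {n : Type*} [Fintype n]
    [DecidableEq n] [Nontrivial n] {x y x' y' : n → ℝ} (hxy : x ⬝ᵥ y = 0)
    (hxy' : x' ⬝ᵥ y' = 0) (hx : x ⬝ᵥ x = x' ⬝ᵥ x') (hy : y ⬝ᵥ y = y' ⬝ᵥ y') :
    ∃ A ∈ orthogonalGroup n ℝ, x ᵥ* A = x' ∧ y ᵥ* A = y' := by
  obtain ⟨i, j, hij⟩ := exists_pair_ne n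
  have hbasis : ∀ x y : n → ℝ, x ⬝ᵥ y = 0 → ∃ b : OrthonormalBasis n ℝ (EuclideanSpace ℝ n),
      x = ‖WithLp.toLp 2 x‖ • (b i).ofLp ∧ y = ‖WithLp.toLp 2 y‖ • (b j).ofLp := by
    intro x y hxy
    set v : n → EuclideanSpace ℝ n :=
      fun k => if k = i then WithLp.toLp 2 x else if k = j then WithLp.toLp 2 y else 0
    have hv : Pairwise fun k l => inner ℝ (v k) (v l) = 0 := by
      intro k l hkl
      simp only [v]
      split_ifs <;> simp_all [EuclideanSpace.inner_eq_star_dotProduct, dotProduct_comm]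
    obtain ⟨b, hb⟩ := exists_orthonormalBasis_eq_norm_smul (by simp) hv
    refine ⟨b, ?_, ?_⟩
    · simpa [v] using congr(WithLp.ofLp $(hb i))
    · simpa [v, hij.symm] using congr(WithLp.ofLp $(hb j))
  have hnorm : ∀ x x' : n → ℝ, x ⬝ᵥ x = x' ⬝ᵥ x' → ‖WithLp.toLp 2 x‖ = ‖WithLp.toLp 2 x'‖ := by
    intro x x' h
    rw [← sq_eq_sq₀ (norm_nonneg _) (norm_nonneg _), ← real_inner_self_eq_norm_sq,
      ← real_inner_self_eq_norm_sq]
    simpa only [EuclideanSpace.inner_eq_star_dotProduct, star_trivial] using h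
  obtain ⟨b, hbx, hby⟩ := hbasis x y hxy
  obtain ⟨b', hbx', hby'⟩ := hbasis x' y' hxy'
  obtain ⟨A, hA, hbA⟩ := b.exists_mem_orthogonalGroup_vecMul_eq b'
  refine ⟨A, hA, ?_, ?_⟩
  · rw [hbx, smul_vecMul, hbA, hnorm x x' hx, ← hbx']
  · rw [hby, smul_vecMul, hbA, hnorm y y' hy, ← hby']

namespace Complex

variable {m n : Type*} [Fintype m]

theorem re_sum_sq (ξ : m → ℂ) :
    (∑ j, ξ j ^ 2).re = (re ∘ ξ) ⬝ᵥ (re ∘ ξ) - (im ∘ ξ) ⬝ᵥ (im ∘ ξ) := by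
  simp [dotProduct, sq, Finset.sum_sub_distrib]

theorem im_sum_sq (ξ : m → ℂ) : (∑ j, ξ j ^ 2).im = 2 * ((re ∘ ξ) ⬝ᵥ (im ∘ ξ)) := by
  simp only [im_sum, sq, mul_im, dotProduct, Finset.mul_sum, Function.comp_apply]
  exact Finset.sum_congr rfl fun j _ => by ring

theorem sum_norm_sq_eq_dotProduct (ξ : m → ℂ) :
    ∑ j, ‖ξ j‖ ^ 2 = (re ∘ ξ) ⬝ᵥ (re ∘ ξ) + (im ∘ ξ) ⬝ᵥ (im ∘ ξ) := by
  simp only [dotProduct, ← Finset.sum_add_distrib, Complex.sq_norm, normSq_apply,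
    Function.comp_apply]

theorem re_comp_vecMul_map_ofReal (ξ : m → ℂ) (A : Matrix m n ℝ) :
    re ∘ (ξ ᵥ* A.map ofReal) = (re ∘ ξ) ᵥ* A := by
  ext j
  simp [vecMul, dotProduct]

theorem im_comp_vecMul_map_ofReal (ξ : m → ℂ) (A : Matrix m n ℝ) :
    im ∘ (ξ ᵥ* A.map ofReal) = (im ∘ ξ) ᵥ* A := by
  ext j
  simp [vecMul, dotProduct]

theorem sum_norm_exp_mul_I_smul_sq (θ : ℝ) (ξ : m → ℂ) :
    ∑ j, ‖(exp (θ * I) • ξ) j‖ ^ 2 = ∑ j, ‖ξ j‖ ^ 2 := by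
  simp [norm_exp_ofReal_mul_I]

theorem sum_smul_sq (c : ℂ) (ξ : m → ℂ) : ∑ j, (c • ξ) j ^ 2 = c ^ 2 * ∑ j, ξ j ^ 2 := by
  simp [mul_pow, Finset.mul_sum]

theorem exists_exp_mul_I_sq_mul_eq {z w : ℂ} (h : ‖z‖ = ‖w‖) :
    ∃ θ : ℝ, exp (θ * I) ^ 2 * z = w := by
  refine ⟨(arg w - arg z) / 2, ?_⟩
  conv_rhs => rw [← norm_mul_exp_arg_mul_I w, ← h]
  conv_lhs => arg 2; rw [← norm_mul_exp_arg_mul_I z]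
  rw [← exp_nat_mul, mul_left_comm, ← exp_add]
  congr 2
  push_cast
  ring

end Complex

section

variable {n : Type*} [Fintype n] [DecidableEq n] [Nontrivial n]

open Complex

theorem exists_mem_orthogonalGroup_vecMul_map_ofReal_eq_of_im_eq_zero {ξ η : n → ℂ}
    (hr : ∑ j, ‖ξ j‖ ^ 2 = ∑ j, ‖η j‖ ^ 2) (hs : ∑ j, ξ j ^ 2 = ∑ j, η j ^ 2)
    (him : (∑ j, ξ j ^ 2).im = 0) :
    ∃ A ∈ orthogonalGroup n ℝ, ξ ᵥ* A.map ofReal = η := by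
  have hre := congrArg re hs
  have him' := congrArg im hs
  simp only [re_sum_sq, im_sum_sq, sum_norm_sq_eq_dotProduct] at hre him him' hr
  obtain ⟨A, hA, hxA, hyA⟩ := exists_mem_orthogonalGroup_vecMul_eq_of_dotProduct
    (x := re ∘ ξ) (y := im ∘ ξ) (x' := re ∘ η) (y' := im ∘ η)
    (by linarith) (by linarith) (by linarith) (by linarith)
  refine ⟨A, hA, funext fun j => Complex.ext ?_ ?_⟩
  · exact congrFun ((re_comp_vecMul_map_ofReal ξ A).trans hxA) j
  · exact congrFun ((im_comp_vecMul_map_ofReal ξ A).trans hyA) j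

theorem exists_mem_orthogonalGroup_vecMul_map_ofReal_eq {ξ η : n → ℂ}
    (hr : ∑ j, ‖ξ j‖ ^ 2 = ∑ j, ‖η j‖ ^ 2) (hs : ∑ j, ξ j ^ 2 = ∑ j, η j ^ 2) :
    ∃ A ∈ orthogonalGroup n ℝ, ξ ᵥ* A.map ofReal = η := by
  obtain ⟨θ, hθ⟩ := exists_exp_mul_I_sq_mul_eq (z := ∑ j, ξ j ^ 2) (w := ‖∑ j, ξ j ^ 2‖)
    (by simp)
  obtain ⟨A, hA, h⟩ := exists_mem_orthogonalGroup_vecMul_map_ofReal_eq_of_im_eq_zero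
    (ξ := exp (θ * I) • ξ) (η := exp (θ * I) • η)
    (by rw [sum_norm_exp_mul_I_smul_sq, sum_norm_exp_mul_I_smul_sq, hr])
    (by rw [sum_smul_sq, sum_smul_sq, hs])
    (by rw [sum_smul_sq, hθ, ofReal_im])
  refine ⟨A, hA, ?_⟩
  rwa [smul_vecMul, smul_right_inj (exp_ne_zero _)] at h

end

/-- a function on `ℂᴺ` invariant under `ξ ↦ e^{iθ} ξ A`, `A ∈ O(N,ℝ)`,
depends only on `Σ|ξ_j|²` and `|Σ ξ_j²|`. -/
theorem rotation_invariant_depends_on_r_s (N : ℕ) (hN : 2 ≤ N)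
    (f : (Fin N → ℂ) → ℝ)
    (hinv : ∀ ξ : Fin N → ℂ, ∀ θ : ℝ, ∀ A ∈ Matrix.orthogonalGroup (Fin N) ℝ,
      f (fun j => Complex.exp (θ * Complex.I) *
        Matrix.vecMul ξ (A.map (Complex.ofReal)) j) = f ξ) :
    ∀ ξ η : Fin N → ℂ,
      (∑ j, ‖ξ j‖ ^ 2 = ∑ j, ‖η j‖ ^ 2) →
      (‖∑ j, ξ j ^ 2‖ = ‖∑ j, η j ^ 2‖) →
      f ξ = f η := by
  intro ξ η hr hs
  have : Nontrivial (Fin N) := Fin.nontrivial_iff_two_le.mpr hN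
  obtain ⟨θ, hθ⟩ := Complex.exists_exp_mul_I_sq_mul_eq hs.symm
  obtain ⟨A, hA, hξA⟩ := exists_mem_orthogonalGroup_vecMul_map_ofReal_eq
    (ξ := ξ) (η := Complex.exp (θ * Complex.I) • η)
    (by rw [Complex.sum_norm_exp_mul_I_smul_sq, hr]) (by rw [Complex.sum_smul_sq, hθ])
  have h := hinv ξ (-θ) A hA
  rw [hξA] at h
  simpa [← mul_assoc, ← Complex.exp_add] using h.symm
end

section
/- Let Sym(m,ℂ) = {V ∈ M_m(ℂ) : Vᵀ = V} and let h : Sym(m,ℂ) × Sym(m,ℂ) → ℂ be sesquilinear (complex linear in the first variable, conjugate linear in the second) and Hermitian, and suppose h(AVAᵀ, AWAᵀ) = h(V,W) for all V, W ∈ Sym(m,ℂ) and all A ∈ U(m). Then there exists a real constant c such that h(V,W) = c · tr(V W*) for all V, W ∈ Sym(m,ℂ). -/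
/-!
Extend `h` to all matrices by `B X Y = h Xˢ Yˢ`, where `Xˢ = (X + Xᵀ) / 2`; this `B` is a
sesquilinear form, unchanged by transposing either argument and invariant under `X ↦ A X Aᵀ` for
unitary `A`. Conjugating by the diagonal unitary with `I` in slot `p` and `1` elsewhere multiplies
`B (E i j) (E k l)` by `I ^ a * conj (I ^ b)`, where `a` and `b` count `p` in `{i, j}` and `{k, l}`;
choosing `p` with `a ≠ b` shows that distinct multisets give orthogonal matrix units. A rotation in
the `(i, j)`-plane then shows that `B (E i i) (E i i)` does not depend on `i` and is twice
`B (E i j) (E i j)` for `i ≠ j`. Hence an invariant form is determined by the single number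
`B (E i₀ i₀) (E i₀ i₀)`, and `tr (Xˢ (Yˢ)ᴴ)` is an invariant form taking the value `1` there.
-/

open Matrix

theorem Multiset.pair_eq_pair_iff {α : Type*} {a b c d : α} :
    ({a, b} : Multiset α) = {c, d} ↔ a = c ∧ b = d ∨ a = d ∧ b = c := by
  simp only [Multiset.insert_eq_cons, Multiset.cons_eq_cons, Multiset.singleton_inj,
    Multiset.singleton_eq_cons_iff]
  grind

theorem Pi.mulSingle_mul_mulSingle_eq_pow_count {n M : Type*} [DecidableEq n] [CommMonoid M]
    (p : n) (z : M) (i j : n) :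
    (Pi.mulSingle p z : n → M) i * (Pi.mulSingle p z : n → M) j =
      z ^ Multiset.count p {i, j} := by
  simp only [Pi.mulSingle_apply, Multiset.insert_eq_cons, Multiset.count_cons,
    Multiset.count_singleton]
  split_ifs <;> grind [pow_succ, pow_zero]

noncomputable section

namespace Matrix

variable {n : Type*}

def symPart : Matrix n n ℂ →ₗ[ℂ] Matrix n n ℂ :=
  (2⁻¹ : ℂ) • (LinearMap.id + (transposeLinearEquiv n n ℂ ℂ).toLinearMap)

theorem symPart_apply (X : Matrix n n ℂ) : symPart X = (2⁻¹ : ℂ) • (X + Xᵀ) := rfl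

theorem transpose_symPart (X : Matrix n n ℂ) : (symPart X)ᵀ = symPart X := by
  simp [symPart_apply, add_comm]

theorem symPart_transpose (X : Matrix n n ℂ) : symPart Xᵀ = symPart X := by
  simp [symPart_apply, add_comm]

theorem symPart_eq_self {X : Matrix n n ℂ} (hX : Xᵀ = X) : symPart X = X := by
  rw [symPart_apply, hX, ← two_smul ℂ X, smul_smul, inv_mul_cancel₀ two_ne_zero, one_smul]

structure IsSesqFormOnSymmetric (h : Matrix n n ℂ → Matrix n n ℂ → ℂ) : Prop where
  add_left : ∀ V V' W : Matrix n n ℂ, Vᵀ = V → V'ᵀ = V' → Wᵀ = W →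
    h (V + V') W = h V W + h V' W
  smul_left : ∀ (a : ℂ) (V W : Matrix n n ℂ), Vᵀ = V → Wᵀ = W → h (a • V) W = a * h V W
  add_right : ∀ V W W' : Matrix n n ℂ, Vᵀ = V → Wᵀ = W → W'ᵀ = W' →
    h V (W + W') = h V W + h V W'
  smul_right : ∀ (a : ℂ) (V W : Matrix n n ℂ), Vᵀ = V → Wᵀ = W →
    h V (a • W) = starRingEnd ℂ a * h V W

variable {h : Matrix n n ℂ → Matrix n n ℂ → ℂ}

def symExtension (hh : IsSesqFormOnSymmetric h) : Matrix n n ℂ →ₗ[ℂ] Matrix n n ℂ →ₗ⋆[ℂ] ℂ :=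
  LinearMap.mk₂'ₛₗ _ _ (fun X Y => h (symPart X) (symPart Y))
    (fun X X' Y => by
      rw [map_add]
      exact hh.add_left _ _ _ (transpose_symPart X) (transpose_symPart X') (transpose_symPart Y))
    (fun a X Y => by
      rw [map_smul]
      exact hh.smul_left _ _ _ (transpose_symPart X) (transpose_symPart Y))
    (fun X Y Y' => by
      rw [map_add]
      exact hh.add_right _ _ _ (transpose_symPart X) (transpose_symPart Y) (transpose_symPart Y'))
    (fun a X Y => by
      rw [map_smul]
      exact hh.smul_right _ _ _ (transpose_symPart X) (transpose_symPart Y))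

theorem symExtension_apply (hh : IsSesqFormOnSymmetric h) (X Y : Matrix n n ℂ) :
    symExtension hh X Y = h (symPart X) (symPart Y) := rfl

variable [Fintype n] [DecidableEq n]

theorem symPart_mul_mul_transpose (A X : Matrix n n ℂ) :
    symPart (A * X * Aᵀ) = A * symPart X * Aᵀ := by
  simp [symPart_apply, transpose_mul, Matrix.mul_add, Matrix.add_mul, Matrix.mul_assoc]

theorem diagonal_mul_single_mul_transpose {α : Type*} [CommSemiring α] (d : n → α) (i j : n) :
    diagonal d * single i j 1 * (diagonal d)ᵀ = (d i * d j) • single i j 1 := by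
  ext a b
  simp only [diagonal_transpose, mul_diagonal, diagonal_mul, single_apply, smul_apply, smul_eq_mul]
  split_ifs <;> grind

theorem diagonal_mem_unitaryGroup {α : Type*} [CommRing α] [StarRing α] {d : n → α}
    (hd : ∀ i, star (d i) * d i = 1) : diagonal d ∈ unitaryGroup n α := by
  rw [mem_unitaryGroup_iff', star_eq_conjTranspose, diagonal_conjTranspose, diagonal_mul_diagonal,
    ← diagonal_one]
  exact congrArg diagonal (funext hd)

theorem trace_mul_mul_transpose_mul_conjTranspose {α : Type*} [CommRing α] [StarRing α]
    {A : Matrix n n α} (hA : A ∈ unitaryGroup n α) (V W : Matrix n n α) :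
    (A * V * Aᵀ * (A * W * Aᵀ)ᴴ).trace = (V * Wᴴ).trace := by
  have hAt : Aᵀ * (Aᵀ)ᴴ = 1 := by
    simpa [star_eq_conjTranspose] using
      mem_unitaryGroup_iff.mp (transpose_mem_unitaryGroup_iff.mpr hA)
  calc (A * V * Aᵀ * (A * W * Aᵀ)ᴴ).trace = (A * (V * Wᴴ) * Aᴴ).trace := by
        simp only [conjTranspose_mul, Matrix.mul_assoc]
        rw [← Matrix.mul_assoc Aᵀ, hAt, Matrix.one_mul]
    _ = (V * Wᴴ).trace := by
        rw [trace_mul_cycle, ← star_eq_conjTranspose, mem_unitaryGroup_iff'.mp hA, Matrix.one_mul]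

def planeRotation (i j : n) (c s : ℝ) : Matrix n n ℂ :=
  1 + ((c : ℂ) - 1) • (single i i 1 + single j j 1) + (s : ℂ) • (single j i 1 - single i j 1)

theorem planeRotation_mem_unitaryGroup {i j : n} (hij : i ≠ j) {c s : ℝ}
    (hcs : c ^ 2 + s ^ 2 = 1) : planeRotation i j c s ∈ unitaryGroup n ℂ := by
  have hcs' : (c : ℂ) ^ 2 + (s : ℂ) ^ 2 = 1 := by exact_mod_cast hcs
  rw [mem_unitaryGroup_iff', star_eq_conjTranspose]
  simp only [planeRotation, conjTranspose_add, conjTranspose_smul, conjTranspose_sub,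
    conjTranspose_single, conjTranspose_one, star_one, Complex.star_def, map_sub,
    Complex.conj_ofReal, map_one]
  simp only [add_mul, mul_add, sub_mul, mul_sub, smul_mul_assoc, mul_smul_comm, one_mul, mul_one,
    single_mul_single_same, single_mul_single_of_ne _ _ _ _ hij,
    single_mul_single_of_ne _ _ _ _ hij.symm, smul_add, smul_sub, smul_smul, add_zero, smul_zero,
    sub_zero]
  linear_combination (norm := module) hcs' • (single i i (1 : ℂ) + single j j 1)

theorem planeRotation_mul_single_mul_transpose {i j : n} (hij : i ≠ j) (c s : ℝ) :
    planeRotation i j c s * single i i 1 * (planeRotation i j c s)ᵀ =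
      ((c : ℂ) ^ 2) • single i i 1 + ((s : ℂ) ^ 2) • single j j 1 +
        ((c : ℂ) * s) • (single i j 1 + single j i 1) := by
  simp only [planeRotation, transpose_add, transpose_smul, transpose_sub, transpose_single,
    transpose_one]
  simp only [add_mul, mul_add, sub_mul, mul_sub, smul_mul_assoc, mul_smul_comm, one_mul, mul_one,
    single_mul_single_same, single_mul_single_of_ne _ _ _ _ hij,
    single_mul_single_of_ne _ _ _ _ hij.symm, smul_add, smul_sub, smul_smul, add_zero, smul_zero,
    sub_zero]
  module

structure IsCongrInvariant (B : Matrix n n ℂ →ₗ[ℂ] Matrix n n ℂ →ₗ⋆[ℂ] ℂ) : Prop where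
  transpose_left : ∀ X Y, B Xᵀ Y = B X Y
  transpose_right : ∀ X Y, B X Yᵀ = B X Y
  unitary_congr : ∀ A ∈ unitaryGroup n ℂ, ∀ X Y, B (A * X * Aᵀ) (A * Y * Aᵀ) = B X Y

namespace IsCongrInvariant

variable {B : Matrix n n ℂ →ₗ[ℂ] Matrix n n ℂ →ₗ⋆[ℂ] ℂ}

theorem apply_single_single_eq_zero (hB : IsCongrInvariant B) {i j k l : n}
    (hne : ({i, j} : Multiset n) ≠ {k, l}) : B (single i j 1) (single k l 1) = 0 := by
  obtain ⟨p, hp⟩ : ∃ p, Multiset.count p {i, j} ≠ Multiset.count p {k, l} := by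
    simpa [Multiset.ext] using hne
  have hd : diagonal (Pi.mulSingle p Complex.I) ∈ unitaryGroup n ℂ :=
    diagonal_mem_unitaryGroup fun q => by by_cases hq : q = p <;> simp [hq]
  have hcongr := hB.unitary_congr _ hd (single i j 1) (single k l 1)
  rw [diagonal_mul_single_mul_transpose, diagonal_mul_single_mul_transpose,
    Pi.mulSingle_mul_mulSingle_eq_pow_count, Pi.mulSingle_mul_mulSingle_eq_pow_count] at hcongr
  simp only [map_smul, LinearMap.smul_apply, LinearMap.map_smulₛₗ, smul_eq_mul] at hcongr
  set u := Complex.I ^ Multiset.count p {i, j}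
  set v := Complex.I ^ Multiset.count p {k, l}
  have hv : starRingEnd ℂ v * v = 1 := by rw [Complex.conj_mul']; simp [v]
  -- a count in a two-element multiset is at most `2 < 4`, the order of `I`
  have huv : u ≠ v := fun huv => hp <| Complex.isPrimitiveRoot_I.pow_inj
    ((Multiset.count_le_card _ _).trans_lt (by simp))
    ((Multiset.count_le_card _ _).trans_lt (by simp)) huv
  have hzero : (u - v) * B (single i j 1) (single k l 1) = 0 := by
    linear_combination v * hcongr - u * B (single i j 1) (single k l 1) * hv
  simpa [sub_eq_zero, huv] using hzero

theorem apply_single_self_eq_of_rotation (hB : IsCongrInvariant B) {i j : n} (hij : i ≠ j)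
    {c s : ℝ} (hcs : c ^ 2 + s ^ 2 = 1) :
    B (single i i 1) (single i i 1) =
      c ^ 4 * B (single i i 1) (single i i 1) + s ^ 4 * B (single j j 1) (single j j 1) +
        4 * c ^ 2 * s ^ 2 * B (single i j 1) (single i j 1) := by
  have hcongr := hB.unitary_congr _ (planeRotation_mem_unitaryGroup hij hcs)
    (single i i 1) (single i i 1)
  rw [planeRotation_mul_single_mul_transpose hij, ← transpose_single i j] at hcongr
  simp only [map_add, map_smul, LinearMap.add_apply, LinearMap.smul_apply, LinearMap.map_smulₛₗ,
    smul_eq_mul, hB.transpose_left, hB.transpose_right, map_mul, map_pow, Complex.conj_ofReal,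
    hB.apply_single_single_eq_zero, ne_eq, Multiset.pair_eq_pair_iff, hij, hij.symm, and_self,
    and_false, false_and, or_self, not_false_eq_true] at hcongr
  linear_combination -hcongr

theorem apply_single_self_eq_and_two_mul_of_ne (hB : IsCongrInvariant B) {i j : n} (hij : i ≠ j) :
    B (single i i 1) (single i i 1) = B (single j j 1) (single j j 1) ∧
      2 * B (single i j 1) (single i j 1) = B (single i i 1) (single i i 1) := by
  -- any `c, s ≠ 0` would do; the 3-4-5 rotation keeps the coefficients rational
  have hi := hB.apply_single_self_eq_of_rotation hij (c := 3 / 5) (s := 4 / 5) (by norm_num)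
  have hj := hB.apply_single_self_eq_of_rotation hij.symm (c := 3 / 5) (s := 4 / 5) (by norm_num)
  rw [← transpose_single i j, hB.transpose_left, hB.transpose_right] at hj
  push_cast at hi hj
  constructor
  · linear_combination (25 / 32 : ℂ) * (hi - hj)
  · linear_combination (-425 / 288 : ℂ) * hi - (200 / 288 : ℂ) * hj

theorem apply_single_self_eq_apply_single_self (hB : IsCongrInvariant B) (i i₀ : n) :
    B (single i i 1) (single i i 1) = B (single i₀ i₀ 1) (single i₀ i₀ 1) := by
  rcases eq_or_ne i i₀ with rfl | hne
  · rfl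
  · exact (hB.apply_single_self_eq_and_two_mul_of_ne hne).1

theorem apply_single_single (hB : IsCongrInvariant B) (i j k l i₀ : n) :
    B (single i j 1) (single k l 1) =
      (if ({i, j} : Multiset n) = {k, l} then if i = j then 1 else 2⁻¹ else 0) *
        B (single i₀ i₀ 1) (single i₀ i₀ 1) := by
  split_ifs with hm hij
  · obtain ⟨rfl, rfl⟩ | ⟨rfl, rfl⟩ := Multiset.pair_eq_pair_iff.mp hm <;> subst hij <;>
      rw [one_mul, hB.apply_single_self_eq_apply_single_self _ i₀]
  · have hoff :
        B (single i j 1) (single i j 1) = 2⁻¹ * B (single i₀ i₀ 1) (single i₀ i₀ 1) := by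
      rw [← hB.apply_single_self_eq_apply_single_self i,
        ← (hB.apply_single_self_eq_and_two_mul_of_ne hij).2]
      ring
    obtain ⟨rfl, rfl⟩ | ⟨rfl, rfl⟩ := Multiset.pair_eq_pair_iff.mp hm
    · exact hoff
    · rw [← transpose_single i j, hB.transpose_right, hoff]
  · rw [hB.apply_single_single_eq_zero hm, zero_mul]

theorem eq_smul (hB : IsCongrInvariant B) {B' : Matrix n n ℂ →ₗ[ℂ] Matrix n n ℂ →ₗ⋆[ℂ] ℂ}
    (hB' : IsCongrInvariant B') {i₀ : n} (h₀ : B' (single i₀ i₀ 1) (single i₀ i₀ 1) = 1) :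
    B = B (single i₀ i₀ 1) (single i₀ i₀ 1) • B' := by
  refine LinearMap.ext_basis (stdBasis ℂ n n) (stdBasis ℂ n n) fun ⟨i, j⟩ ⟨k, l⟩ => ?_
  rw [stdBasis_eq_single, stdBasis_eq_single, LinearMap.smul_apply, LinearMap.smul_apply,
    hB.apply_single_single _ _ _ _ i₀, hB'.apply_single_single _ _ _ _ i₀, h₀, smul_eq_mul]
  ring

end IsCongrInvariant

theorem isCongrInvariant_symExtension (hh : IsSesqFormOnSymmetric h)
    (hinv : ∀ V W : Matrix n n ℂ, Vᵀ = V → Wᵀ = W →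
      ∀ A ∈ unitaryGroup n ℂ, h (A * V * Aᵀ) (A * W * Aᵀ) = h V W) :
    IsCongrInvariant (symExtension hh) where
  transpose_left X Y := by rw [symExtension_apply, symExtension_apply, symPart_transpose]
  transpose_right X Y := by rw [symExtension_apply, symExtension_apply, symPart_transpose]
  unitary_congr A hA X Y := by
    rw [symExtension_apply, symExtension_apply, symPart_mul_mul_transpose,
      symPart_mul_mul_transpose, hinv _ _ (transpose_symPart X) (transpose_symPart Y) A hA]

def traceForm : Matrix n n ℂ →ₗ[ℂ] Matrix n n ℂ →ₗ⋆[ℂ] ℂ :=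
  symExtension (h := fun V W => (V * Wᴴ).trace)
    { add_left := fun V V' W _ _ _ => by rw [Matrix.add_mul, trace_add]
      smul_left := fun a V W _ _ => by rw [Matrix.smul_mul, trace_smul, smul_eq_mul]
      add_right := fun V W W' _ _ _ => by rw [conjTranspose_add, Matrix.mul_add, trace_add]
      smul_right := fun a V W _ _ => by
        rw [conjTranspose_smul, Matrix.mul_smul, trace_smul, smul_eq_mul, starRingEnd_apply] }

theorem isCongrInvariant_traceForm : IsCongrInvariant (traceForm (n := n)) :=
  isCongrInvariant_symExtension _ fun V W _ _ _ hA =>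
    trace_mul_mul_transpose_mul_conjTranspose hA V W

theorem traceForm_single_self (i : n) : traceForm (single i i 1) (single i i 1) = 1 := by
  rw [traceForm, symExtension_apply, symPart_eq_self (transpose_single i i 1),
    conjTranspose_single, star_one, single_mul_single_same, mul_one, trace_single_eq_same]

theorem IsCongrInvariant.exists_real_eq_smul_traceForm
    {B : Matrix n n ℂ →ₗ[ℂ] Matrix n n ℂ →ₗ⋆[ℂ] ℂ} (hB : IsCongrInvariant B)
    (hherm : ∀ X Y, B Y X = starRingEnd ℂ (B X Y)) :
    ∃ c : ℝ, B = (c : ℂ) • traceForm := by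
  rcases isEmpty_or_nonempty n with hn | ⟨⟨i₀⟩⟩
  · exact ⟨0, LinearMap.ext fun X => by rw [Subsingleton.elim X 0, map_zero, map_zero]⟩
  · refine ⟨(B (single i₀ i₀ 1) (single i₀ i₀ 1)).re, ?_⟩
    rw [Complex.conj_eq_iff_re.mp (hherm _ _).symm]
    exact hB.eq_smul isCongrInvariant_traceForm (traceForm_single_self i₀)

end Matrix

end

/-- every `U(m)`-invariant (under `V ↦ A V Aᵀ`) Hermitian sesquilinear form on
the symmetric complex matrices is a real constant multiple of `(V,W) ↦ tr(V W*)`. -/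
theorem invariant_hermitian_form_typeII (m : ℕ)
    (h : Matrix (Fin m) (Fin m) ℂ → Matrix (Fin m) (Fin m) ℂ → ℂ)
    (hadd₁ : ∀ V V' W : Matrix (Fin m) (Fin m) ℂ, Vᵀ = V → V'ᵀ = V' → Wᵀ = W →
      h (V + V') W = h V W + h V' W)
    (hsmul₁ : ∀ (a : ℂ) (V W : Matrix (Fin m) (Fin m) ℂ), Vᵀ = V → Wᵀ = W →
      h (a • V) W = a * h V W)
    (hadd₂ : ∀ V W W' : Matrix (Fin m) (Fin m) ℂ, Vᵀ = V → Wᵀ = W → W'ᵀ = W' →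
      h V (W + W') = h V W + h V W')
    (hsmul₂ : ∀ (a : ℂ) (V W : Matrix (Fin m) (Fin m) ℂ), Vᵀ = V → Wᵀ = W →
      h V (a • W) = starRingEnd ℂ a * h V W)
    (hherm : ∀ V W : Matrix (Fin m) (Fin m) ℂ, Vᵀ = V → Wᵀ = W →
      h W V = starRingEnd ℂ (h V W))
    (hinv : ∀ V W : Matrix (Fin m) (Fin m) ℂ, Vᵀ = V → Wᵀ = W →
      ∀ A ∈ Matrix.unitaryGroup (Fin m) ℂ, h (A * V * Aᵀ) (A * W * Aᵀ) = h V W) :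
    ∃ c : ℝ, ∀ V W : Matrix (Fin m) (Fin m) ℂ, Vᵀ = V → Wᵀ = W →
      h V W = (c : ℂ) * (V * Wᴴ).trace := by
  have hh : IsSesqFormOnSymmetric h := ⟨hadd₁, hsmul₁, hadd₂, hsmul₂⟩
  obtain ⟨c, hc⟩ := (isCongrInvariant_symExtension hh hinv).exists_real_eq_smul_traceForm
    fun X Y => hherm _ _ (transpose_symPart X) (transpose_symPart Y)
  refine ⟨c, fun V W hV hW => ?_⟩
  have hVW := LinearMap.congr_fun₂ hc V W
  rwa [LinearMap.smul_apply, LinearMap.smul_apply, traceForm, symExtension_apply,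
    symExtension_apply, symPart_eq_self hV, symPart_eq_self hW, smul_eq_mul] at hVW
end
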